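/- arXiv:2012.08144 — 2 statements merged into one kernel-verified Lean document; each statement's English description precedes it below -/
import Mathlib

section
/- Let m ≥ 5. For each i ∈ {1,2,3}, the contraction to R_m of the extension of J_m^i to the localization of R_m away from y_1 equals the contraction to R_m of the extension of J_m^i to the localization of R_m away from y_1 − 3z_1. (Equivalently, the closure of V(J_m^i) ∩ D(y_1) equals the closure of V(J_m^i) ∩ D(y_1 − 3z_1).) -/
noncomputable section

open MvPolynomial

/-- `R m = ℂ[x_0,…,x_m, y_0,…,y_m, z_0,…,z_m]`. -/
abbrev R (m : ℕ) : Type := MvPolynomial (Fin 3 × Fin (m + 1)) ℂ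

/-- the variable `x_i` (for `i ≤ m`). -/
def Xv (m i : ℕ) : R m := if h : i < m + 1 then X (0, ⟨i, h⟩) else 0
/-- the variable `y_i` (for `i ≤ m`). -/
def Yv (m i : ℕ) : R m := if h : i < m + 1 then X (1, ⟨i, h⟩) else 0
/-- the variable `z_i` (for `i ≤ m`). -/
def Zv (m i : ℕ) : R m := if h : i < m + 1 then X (2, ⟨i, h⟩) else 0

/-- `Σ_{i=0}^m x_i t^i`. -/
def xSer (m : ℕ) : Polynomial (R m) :=
  ∑ i ∈ Finset.range (m + 1), Polynomial.C (Xv m i) * Polynomial.X ^ i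
/-- `Σ_{i=0}^m y_i t^i`. -/
def ySer (m : ℕ) : Polynomial (R m) :=
  ∑ i ∈ Finset.range (m + 1), Polynomial.C (Yv m i) * Polynomial.X ^ i
/-- `Σ_{i=0}^m z_i t^i`. -/
def zSer (m : ℕ) : Polynomial (R m) :=
  ∑ i ∈ Finset.range (m + 1), Polynomial.C (Zv m i) * Polynomial.X ^ i

/-- `f^{(j)}`: the coefficient of `t^j` in
`f(Σ x_i t^i, Σ y_i t^i, Σ z_i t^i)` for `f = x² − y²z + z³` (the `D₄` singularity). -/
def fD (m j : ℕ) : R m :=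
  (xSer m ^ 2 - ySer m ^ 2 * zSer m + zSer m ^ 3).coeff j

/-- The ideal `⟨f^{(0)},…,f^{(m)}⟩`. -/
def FId (m : ℕ) : Ideal (R m) := Ideal.span {g | ∃ j ≤ m, g = fD m j}

/-- `I_m^0 = ⟨x_0, x_1, x_2, y_0, y_1, z_0, z_1, f^{(0)},…,f^{(m)}⟩`. -/
def I0 (m : ℕ) : Ideal (R m) :=
  Ideal.span {Xv m 0, Xv m 1, Xv m 2, Yv m 0, Yv m 1, Zv m 0, Zv m 1} ⊔ FId m

/-- `J_m^1 = ⟨x_0, x_1, y_0, z_0, z_1, f^{(0)},…,f^{(m)}⟩`,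
`J_m^2 = ⟨x_0, x_1, y_0, z_0, y_1 − z_1, f^{(0)},…,f^{(m)}⟩`,
`J_m^3 = ⟨x_0, x_1, y_0, z_0, y_1 + z_1, f^{(0)},…,f^{(m)}⟩`. -/
def Jd (m : ℕ) : ℕ → Ideal (R m)
  | 2 => Ideal.span {Xv m 0, Xv m 1, Yv m 0, Zv m 0, Yv m 1 - Zv m 1} ⊔ FId m
  | 3 => Ideal.span {Xv m 0, Xv m 1, Yv m 0, Zv m 0, Yv m 1 + Zv m 1} ⊔ FId m
  | _ => Ideal.span {Xv m 0, Xv m 1, Yv m 0, Zv m 0, Zv m 1} ⊔ FId m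

/-- The contraction to `R_m` of the extension of `J` to the localization of `R_m`
away from `g`. -/
def contrAway (m : ℕ) (g : R m) (J : Ideal (R m)) : Ideal (R m) :=
  (J.map (algebraMap (R m) (Localization.Away g))).comap
    (algebraMap (R m) (Localization.Away g))

/-- `I_m^0` and, for `i = 1,2,3`, the ideal `I_m^i`: the contraction to `R_m` of the
extension of `J_m^i` to the localization of `R_m` away from `y_1`. -/
def Idl (m i : ℕ) : Ideal (R m) :=
  if i = 0 then I0 m else contrAway m (Yv m 1) (Jd m i)


lemma mem_contrAway {m : ℕ} {g : R m} (hg : g ≠ 0) {J : Ideal (R m)} {r : R m} :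
    r ∈ contrAway m g J ↔ ∃ n : ℕ, g ^ n * r ∈ J := by
  have hinj : Function.Injective (algebraMap (R m) (Localization.Away g)) :=
    IsLocalization.injective _ (powers_le_nonZeroDivisors_of_noZeroDivisors hg)
  rw [contrAway, Ideal.mem_comap, IsLocalization.mem_map_algebraMap_iff (Submonoid.powers g)]
  constructor
  · rintro ⟨⟨⟨a, ha⟩, s⟩, h⟩
    obtain ⟨n, hn⟩ := s.2
    refine ⟨n, ?_⟩
    have key : (s : R m) * r = a := hinj (by rw [map_mul, mul_comm]; exact h)
    simp only at hn; rw [hn, key]; exact ha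
  · rintro ⟨n, hn⟩
    refine ⟨⟨⟨g ^ n * r, hn⟩, ⟨g ^ n, ⟨n, rfl⟩⟩⟩, ?_⟩
    simp only [← map_mul]
    rw [mul_comm]

lemma contrAway_le {m : ℕ} {g g' c : R m} (hg : g ≠ 0) (hg' : g' ≠ 0) {J : Ideal (R m)}
    (h : g' - c * g ∈ J) : contrAway m g J ≤ contrAway m g' J := by
  intro r hr
  rw [mem_contrAway hg] at hr
  obtain ⟨n, hn⟩ := hr
  rw [mem_contrAway hg']
  refine ⟨n, ?_⟩
  rw [← Ideal.Quotient.eq_zero_iff_mem] at hn ⊢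
  have hgg : Ideal.Quotient.mk J g' = Ideal.Quotient.mk J (c * g) := Ideal.Quotient.eq.mpr h
  rw [map_mul, map_pow, hgg, ← map_pow, ← map_mul]
  have : (c * g) ^ n * r = c ^ n * (g ^ n * r) := by ring
  rw [this, map_mul, hn, mul_zero]

lemma contrAway_congr {m : ℕ} {g g' c : R m} (hg : g ≠ 0) (hg' : g' ≠ 0) {J : Ideal (R m)}
    (hc : IsUnit c) (h : g' - c * g ∈ J) : contrAway m g J = contrAway m g' J := by
  obtain ⟨u, rfl⟩ := hc
  refine le_antisymm (contrAway_le hg hg' h) (contrAway_le (c := (↑u⁻¹ : R m)) hg' hg ?_)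
  have key : g - ↑u⁻¹ * g' = -(↑u⁻¹ * (g' - ↑u * g)) := by
    rw [mul_sub, ← mul_assoc, Units.inv_mul, one_mul]; ring
  rw [key]
  exact J.neg_mem (J.mul_mem_left _ h)

/- STATEMENT 13: for `m ≥ 5` and each `i ∈ {1,2,3}`, the contraction to `R_m` of the
extension of `J_m^i` to the localization away from `y_1` equals the contraction of its
extension to the localization away from `y_1 − 3z_1`. -/
theorem stmt13 (m : ℕ) (hm : 5 ≤ m) (i : ℕ) (hi : i ∈ ({1, 2, 3} : Set ℕ)) :
    contrAway m (Yv m 1) (Jd m i) = contrAway m (Yv m 1 - 3 * Zv m 1) (Jd m i) := by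
  have h1 : (1 : ℕ) < m + 1 := by omega
  have hy : Yv m 1 = X (1, ⟨1, h1⟩) := by rw [Yv]; exact dif_pos h1
  have hz : Zv m 1 = X (2, ⟨1, h1⟩) := by rw [Zv]; exact dif_pos h1
  have hg : Yv m 1 ≠ 0 := by rw [hy]; exact X_ne_zero _
  have hg' : Yv m 1 - 3 * Zv m 1 ≠ 0 := by
    intro h
    rw [hy, hz] at h
    have := congrArg (eval (fun p : Fin 3 × Fin (m + 1) => if p.1 = 1 then (1 : ℂ) else 0)) h
    simp at this
  simp only [Set.mem_insert_iff, Set.mem_singleton_iff] at hi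
  rcases hi with rfl | rfl | rfl
  · refine contrAway_congr hg hg' isUnit_one ?_
    have hzmem : Zv m 1 ∈ Jd m 1 := Ideal.mem_sup_left (Ideal.subset_span (by simp))
    have key : (Yv m 1 - 3 * Zv m 1) - 1 * Yv m 1 = (-3) * Zv m 1 := by ring
    rw [key]
    exact Ideal.mul_mem_left _ _ hzmem
  · have hc : IsUnit ((-2 : R m)) := by
      have e : ((algebraMap ℂ (R m)) (-2)) = -2 := by simp [map_ofNat]
      rw [← e]; exact (isUnit_iff_ne_zero.mpr (by norm_num)).map _
    refine contrAway_congr hg hg' hc ?_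
    have hmem : Yv m 1 - Zv m 1 ∈ Jd m 2 := Ideal.mem_sup_left (Ideal.subset_span (by simp))
    have key : (Yv m 1 - 3 * Zv m 1) - (-2) * Yv m 1 = 3 * (Yv m 1 - Zv m 1) := by ring
    rw [key]
    exact Ideal.mul_mem_left _ _ hmem
  · have hc : IsUnit ((4 : R m)) := by
      have e : ((algebraMap ℂ (R m)) 4) = 4 := by simp [map_ofNat]
      rw [← e]; exact (isUnit_iff_ne_zero.mpr (by norm_num)).map _
    refine contrAway_congr hg hg' hc ?_
    have hmem : Yv m 1 + Zv m 1 ∈ Jd m 3 := Ideal.mem_sup_left (Ideal.subset_span (by simp))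
    have key : (Yv m 1 - 3 * Zv m 1) - 4 * Yv m 1 = (-3) * (Yv m 1 + Zv m 1) := by ring
    rw [key]
    exact Ideal.mul_mem_left _ _ hmem


end
end

section
/- Let m ≥ 5. Then g_1 := −4y_2²z_2² + y_1²z_3² + 4x_3²z_2 − 4x_2x_3z_3 belongs to I_m^1, and g_2 := −y_2⁴ − 4y_2³z_2 + 2y_2²z_2² + 12y_2z_2³ − 9z_2⁴ + 4y_3²z_1² − 8y_3z_1²z_3 + 4z_1²z_3² + 8x_3²y_2 − 8x_3²z_2 − 8x_2x_3y_3 + 8x_2x_3z_3 belongs to I_m^2. -/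
noncomputable section

open MvPolynomial

/- STATEMENT 15: for `m ≥ 5`,
`g₁ = −4y₂²z₂² + y₁²z₃² + 4x₃²z₂ − 4x₂x₃z₃ ∈ I_m^1` and
`g₂ = −y₂⁴ − 4y₂³z₂ + 2y₂²z₂² + 12y₂z₂³ − 9z₂⁴ + 4y₃²z₁² − 8y₃z₁²z₃ + 4z₁²z₃²
      + 8x₃²y₂ − 8x₃²z₂ − 8x₂x₃y₃ + 8x₂x₃z₃ ∈ I_m^2`. -/

lemma coeff_xSer (m i : ℕ) : (xSer m).coeff i = Xv m i := by
  unfold xSer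
  rw [Polynomial.finset_sum_coeff]
  simp only [Polynomial.coeff_C_mul, Polynomial.coeff_X_pow, mul_ite, mul_one, mul_zero]
  by_cases h : i < m + 1
  · rw [Finset.sum_ite_eq (Finset.range (m+1)) i (fun j => Xv m j)]
    simp [h]
  · rw [Finset.sum_eq_zero, Xv, dif_neg h]
    intro j hj
    rw [if_neg]
    exact fun e => h (e ▸ Finset.mem_range.mp hj)

lemma coeff_ySer (m i : ℕ) : (ySer m).coeff i = Yv m i := by
  unfold ySer
  rw [Polynomial.finset_sum_coeff]
  simp only [Polynomial.coeff_C_mul, Polynomial.coeff_X_pow, mul_ite, mul_one, mul_zero]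
  by_cases h : i < m + 1
  · rw [Finset.sum_ite_eq (Finset.range (m+1)) i (fun j => Yv m j)]
    simp [h]
  · rw [Finset.sum_eq_zero, Yv, dif_neg h]
    intro j hj
    rw [if_neg]
    exact fun e => h (e ▸ Finset.mem_range.mp hj)

lemma coeff_zSer (m i : ℕ) : (zSer m).coeff i = Zv m i := by
  unfold zSer
  rw [Polynomial.finset_sum_coeff]
  simp only [Polynomial.coeff_C_mul, Polynomial.coeff_X_pow, mul_ite, mul_one, mul_zero]
  by_cases h : i < m + 1
  · rw [Finset.sum_ite_eq (Finset.range (m+1)) i (fun j => Zv m j)]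
    simp [h]
  · rw [Finset.sum_eq_zero, Zv, dif_neg h]
    intro j hj
    rw [if_neg]
    exact fun e => h (e ▸ Finset.mem_range.mp hj)

lemma fD4_eq (m : ℕ) : fD m 4 = (3)*(Zv m 1)^2*(Zv m 2) + (3)*(Zv m 0)*(Zv m 2)^2 + (6)*(Zv m 0)*(Zv m 1)*(Zv m 3) + (3)*(Zv m 0)^2*(Zv m 4) + (-1)*(Yv m 2)^2*(Zv m 0) + (-2)*(Yv m 1)*(Yv m 3)*(Zv m 0) + (-2)*(Yv m 1)*(Yv m 2)*(Zv m 1) + (-1)*(Yv m 1)^2*(Zv m 2) + (-2)*(Yv m 0)*(Yv m 4)*(Zv m 0) + (-2)*(Yv m 0)*(Yv m 3)*(Zv m 1) + (-2)*(Yv m 0)*(Yv m 2)*(Zv m 2) + (-2)*(Yv m 0)*(Yv m 1)*(Zv m 3) + (-1)*(Yv m 0)^2*(Zv m 4) + (1)*(Xv m 2)^2 + (2)*(Xv m 1)*(Xv m 3) + (2)*(Xv m 0)*(Xv m 4) := by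
  have h3 : (zSer m)^3 = zSer m * zSer m * zSer m := by ring
  have h2 : (xSer m)^2 = xSer m * xSer m := by ring
  have hy2 : (ySer m)^2 * zSer m = ySer m * ySer m * zSer m := by ring
  unfold fD
  rw [h3, h2, hy2]
  simp only [Polynomial.coeff_add, Polynomial.coeff_sub, Polynomial.coeff_mul,
    Finset.Nat.sum_antidiagonal_eq_sum_range_succ_mk, Finset.sum_range_succ,
    Finset.sum_range_zero, coeff_xSer, coeff_ySer, coeff_zSer]
  norm_num
  ring

lemma fD5_eq (m : ℕ) : fD m 5 = (3)*(Zv m 1)*(Zv m 2)^2 + (3)*(Zv m 1)^2*(Zv m 3) + (6)*(Zv m 0)*(Zv m 2)*(Zv m 3) + (6)*(Zv m 0)*(Zv m 1)*(Zv m 4) + (3)*(Zv m 0)^2*(Zv m 5) + (-2)*(Yv m 2)*(Yv m 3)*(Zv m 0) + (-1)*(Yv m 2)^2*(Zv m 1) + (-2)*(Yv m 1)*(Yv m 4)*(Zv m 0) + (-2)*(Yv m 1)*(Yv m 3)*(Zv m 1) + (-2)*(Yv m 1)*(Yv m 2)*(Zv m 2) + (-1)*(Yv m 1)^2*(Zv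 m 3) + (-2)*(Yv m 0)*(Yv m 5)*(Zv m 0) + (-2)*(Yv m 0)*(Yv m 4)*(Zv m 1) + (-2)*(Yv m 0)*(Yv m 3)*(Zv m 2) + (-2)*(Yv m 0)*(Yv m 2)*(Zv m 3) + (-2)*(Yv m 0)*(Yv m 1)*(Zv m 4) + (-1)*(Yv m 0)^2*(Zv m 5) + (2)*(Xv m 2)*(Xv m 3) + (2)*(Xv m 1)*(Xv m 4) + (2)*(Xv m 0)*(Xv m 5) := by
  have h3 : (zSer m)^3 = zSer m * zSer m * zSer m := by ring
  have h2 : (xSer m)^2 = xSer m * xSer m := by ring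
  have hy2 : (ySer m)^2 * zSer m = ySer m * ySer m * zSer m := by ring
  unfold fD
  rw [h3, h2, hy2]
  simp only [Polynomial.coeff_add, Polynomial.coeff_sub, Polynomial.coeff_mul,
    Finset.Nat.sum_antidiagonal_eq_sum_range_succ_mk, Finset.sum_range_succ,
    Finset.sum_range_zero, coeff_xSer, coeff_ySer, coeff_zSer]
  norm_num
  ring

lemma mem_contrAway_of_pow_mul_mem (m : ℕ) (y g : R m) (J : Ideal (R m)) (k : ℕ)
    (h : y ^ k * g ∈ J) : g ∈ contrAway m y J := by
  unfold contrAway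
  rw [Ideal.mem_comap]
  have hy : IsUnit (algebraMap (R m) (Localization.Away y) y) :=
    IsLocalization.map_units (M := Submonoid.powers y) (Localization.Away y)
      ⟨y, Submonoid.mem_powers y⟩
  obtain ⟨u, hu⟩ := hy
  have h1 : (algebraMap (R m) (Localization.Away y)) (y ^ k * g) ∈
      J.map (algebraMap (R m) (Localization.Away y)) := Ideal.mem_map_of_mem _ h
  have e : (algebraMap (R m) (Localization.Away y)) g
      = ((u⁻¹ : (Localization.Away y)ˣ) : Localization.Away y) ^ k
        * (algebraMap (R m) (Localization.Away y)) (y ^ k * g) := by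
    rw [map_mul, map_pow, ← hu, ← mul_assoc, ← mul_pow, Units.inv_mul, one_pow, one_mul]
  rw [e]
  exact Ideal.mul_mem_left _ _ h1

lemma fD_mem_FId (m j : ℕ) (hj : j ≤ m) : fD m j ∈ FId m :=
  Ideal.subset_span ⟨j, hj, rfl⟩

set_option maxHeartbeats 4000000 in
lemma key1 (m : ℕ) :
    Yv m 1 ^ 2 * (-4 * Yv m 2 ^ 2 * Zv m 2 ^ 2 + Yv m 1 ^ 2 * Zv m 3 ^ 2
      + 4 * Xv m 3 ^ 2 * Zv m 2 - 4 * Xv m 2 * Xv m 3 * Zv m 3)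
    = (-(4*(Xv m 3)^2)) * fD m 4
    + (fD m 5 + 4*(Yv m 1)*(Yv m 2)*(Zv m 2)) * fD m 5
    + ((-12)*(Xv m 5)*(Zv m 1)*(Zv m 2)^2 + (-12)*(Xv m 5)*(Zv m 1)^2*(Zv m 3) + (-24)*(Xv m 5)*(Zv m 0)*(Zv m 2)*(Zv m 3) + (-24)*(Xv m 5)*(Zv m 0)*(Zv m 1)*(Zv m 4) + (-12)*(Xv m 5)*(Zv m 0)^2*(Zv m 5) + (8)*(Xv m 5)*(Yv m 2)*(Yv m 3)*(Zv m 0) + (4)*(Xv m 5)*(Yv m 2)^2*(Zv m 1) + (8)*(Xv m 5)*(Yv m 1)*(Yv m 4)*(Zv m 0) + (8)*(Xv m 5)*(Yv m 1)*(Yv m 3)*(Zv m 1) + (4)*(Xv m 5)*(Yv m 1)^2*(Zv m 3) + (8)*(Xv m 5)*(Yv m 0)*(Yv m 5)*(Zv m 0) + (8)*(Xv m 5)*(Yv m 0)*(Yv m 4)*(Zv m 1) + (8)*(Xv m 5)*(Yv m 0)*(Yv m 3)*(Zv m 2) + (8)*(Xv m 5)*(Yv m 0)*(Yv m 2)*(Zv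 m 3) + (8)*(Xv m 5)*(Yv m 0)*(Yv m 1)*(Zv m 4) + (4)*(Xv m 5)*(Yv m 0)^2*(Zv m 5) + (8)*(Xv m 3)^2*(Xv m 4) + (-8)*(Xv m 2)*(Xv m 3)*(Xv m 5) + (-8)*(Xv m 1)*(Xv m 4)*(Xv m 5) + (-4)*(Xv m 0)*(Xv m 5)^2) * Xv m 0
    + ((-12)*(Xv m 4)*(Zv m 1)*(Zv m 2)^2 + (-12)*(Xv m 4)*(Zv m 1)^2*(Zv m 3) + (-24)*(Xv m 4)*(Zv m 0)*(Zv m 2)*(Zv m 3) + (-24)*(Xv m 4)*(Zv m 0)*(Zv m 1)*(Zv m 4) + (-12)*(Xv m 4)*(Zv m 0)^2*(Zv m 5) + (8)*(Xv m 4)*(Yv m 2)*(Yv m 3)*(Zv m 0) + (4)*(Xv m 4)*(Yv m 2)^2*(Zv m 1) + (8)*(Xv m 4)*(Yv m 1)*(Yv m 4)*(Zv m 0) + (8)*(Xv m 4)*(Yv m 1)*(Yv m 3)*(Zv m 1) + (4)*(Xv m 4)*(Yv m 1)^2*(Zv m 3) + (8)*(Xv m 4)*(Yv m 0)*(Yv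 m 5)*(Zv m 0) + (8)*(Xv m 4)*(Yv m 0)*(Yv m 4)*(Zv m 1) + (8)*(Xv m 4)*(Yv m 0)*(Yv m 3)*(Zv m 2) + (8)*(Xv m 4)*(Yv m 0)*(Yv m 2)*(Zv m 3) + (8)*(Xv m 4)*(Yv m 0)*(Yv m 1)*(Zv m 4) + (4)*(Xv m 4)*(Yv m 0)^2*(Zv m 5) + (8)*(Xv m 3)^3 + (-8)*(Xv m 2)*(Xv m 3)*(Xv m 4) + (-4)*(Xv m 1)*(Xv m 4)^2) * Xv m 1
    + ((12)*(Yv m 5)*(Zv m 0)*(Zv m 1)*(Zv m 2)^2 + (12)*(Yv m 5)*(Zv m 0)*(Zv m 1)^2*(Zv m 3) + (24)*(Yv m 5)*(Zv m 0)^2*(Zv m 2)*(Zv m 3) + (24)*(Yv m 5)*(Zv m 0)^2*(Zv m 1)*(Zv m 4) + (12)*(Yv m 5)*(Zv m 0)^3*(Zv m 5) + (12)*(Yv m 4)*(Zv m 1)^2*(Zv m 2)^2 + (12)*(Yv m 4)*(Zv m 1)^3*(Zv m 3) + (24)*(Yv m 4)*(Zv m 0)*(Zv m 1)*(Zv m 2)*(Zv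 m 3) + (24)*(Yv m 4)*(Zv m 0)*(Zv m 1)^2*(Zv m 4) + (12)*(Yv m 4)*(Zv m 0)^2*(Zv m 1)*(Zv m 5) + (12)*(Yv m 3)*(Zv m 1)*(Zv m 2)^3 + (12)*(Yv m 3)*(Zv m 1)^2*(Zv m 2)*(Zv m 3) + (24)*(Yv m 3)*(Zv m 0)*(Zv m 2)^2*(Zv m 3) + (24)*(Yv m 3)*(Zv m 0)*(Zv m 1)*(Zv m 2)*(Zv m 4) + (12)*(Yv m 3)*(Zv m 0)^2*(Zv m 2)*(Zv m 5) + (12)*(Yv m 2)*(Zv m 1)*(Zv m 2)^2*(Zv m 3) + (12)*(Yv m 2)*(Zv m 1)^2*(Zv m 3)^2 + (24)*(Yv m 2)*(Zv m 0)*(Zv m 2)*(Zv m 3)^2 + (24)*(Yv m 2)*(Zv m 0)*(Zv m 1)*(Zv m 3)*(Zv m 4) + (12)*(Yv m 2)*(Zv m 0)^2*(Zv m 3)*(Zv m 5) + (-8)*(Yv m 2)*(Yv m 3)*(Yv m 5)*(Zv m 0)^2 + (-8)*(Yv m 2)*(Yv m 3)*(Yv m 4)*(Zv m 0)*(Zv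 m 1) + (-8)*(Yv m 2)*(Yv m 3)^2*(Zv m 0)*(Zv m 2) + (-4)*(Yv m 2)^2*(Yv m 5)*(Zv m 0)*(Zv m 1) + (-4)*(Yv m 2)^2*(Yv m 4)*(Zv m 1)^2 + (-4)*(Yv m 2)^2*(Yv m 3)*(Zv m 1)*(Zv m 2) + (-8)*(Yv m 2)^2*(Yv m 3)*(Zv m 0)*(Zv m 3) + (-4)*(Yv m 2)^3*(Zv m 1)*(Zv m 3) + (12)*(Yv m 1)*(Zv m 1)*(Zv m 2)^2*(Zv m 4) + (12)*(Yv m 1)*(Zv m 1)^2*(Zv m 3)*(Zv m 4) + (24)*(Yv m 1)*(Zv m 0)*(Zv m 2)*(Zv m 3)*(Zv m 4) + (24)*(Yv m 1)*(Zv m 0)*(Zv m 1)*(Zv m 4)^2 + (12)*(Yv m 1)*(Zv m 0)^2*(Zv m 4)*(Zv m 5) + (-8)*(Yv m 1)*(Yv m 4)*(Yv m 5)*(Zv m 0)^2 + (-8)*(Yv m 1)*(Yv m 4)^2*(Zv m 0)*(Zv m 1) + (-8)*(Yv m 1)*(Yv m 3)*(Yv m 5)*(Zv m 0)*(Zv m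 1) + (-8)*(Yv m 1)*(Yv m 3)*(Yv m 4)*(Zv m 1)^2 + (-8)*(Yv m 1)*(Yv m 3)*(Yv m 4)*(Zv m 0)*(Zv m 2) + (-8)*(Yv m 1)*(Yv m 3)^2*(Zv m 1)*(Zv m 2) + (-8)*(Yv m 1)*(Yv m 2)*(Yv m 4)*(Zv m 0)*(Zv m 3) + (-8)*(Yv m 1)*(Yv m 2)*(Yv m 3)*(Zv m 1)*(Zv m 3) + (-8)*(Yv m 1)*(Yv m 2)*(Yv m 3)*(Zv m 0)*(Zv m 4) + (-4)*(Yv m 1)*(Yv m 2)^2*(Zv m 1)*(Zv m 4) + (-4)*(Yv m 1)^2*(Yv m 5)*(Zv m 0)*(Zv m 3) + (-4)*(Yv m 1)^2*(Yv m 4)*(Zv m 1)*(Zv m 3) + (-8)*(Yv m 1)^2*(Yv m 4)*(Zv m 0)*(Zv m 4) + (-4)*(Yv m 1)^2*(Yv m 3)*(Zv m 2)*(Zv m 3) + (-8)*(Yv m 1)^2*(Yv m 3)*(Zv m 1)*(Zv m 4) + (-4)*(Yv m 1)^2*(Yv m 2)*(Zv m 3)^2 + (-4)*(Yv m 1)^3*(Zv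 m 3)*(Zv m 4) + (6)*(Yv m 0)*(Zv m 1)*(Zv m 2)^2*(Zv m 5) + (6)*(Yv m 0)*(Zv m 1)^2*(Zv m 3)*(Zv m 5) + (12)*(Yv m 0)*(Zv m 0)*(Zv m 2)*(Zv m 3)*(Zv m 5) + (12)*(Yv m 0)*(Zv m 0)*(Zv m 1)*(Zv m 4)*(Zv m 5) + (6)*(Yv m 0)*(Zv m 0)^2*(Zv m 5)^2 + (-4)*(Yv m 0)*(Yv m 5)^2*(Zv m 0)^2 + (-8)*(Yv m 0)*(Yv m 4)*(Yv m 5)*(Zv m 0)*(Zv m 1) + (-4)*(Yv m 0)*(Yv m 4)^2*(Zv m 1)^2 + (-8)*(Yv m 0)*(Yv m 3)*(Yv m 5)*(Zv m 0)*(Zv m 2) + (-8)*(Yv m 0)*(Yv m 3)*(Yv m 4)*(Zv m 1)*(Zv m 2) + (-4)*(Yv m 0)*(Yv m 3)^2*(Zv m 2)^2 + (-8)*(Yv m 0)*(Yv m 2)*(Yv m 5)*(Zv m 0)*(Zv m 3) + (-8)*(Yv m 0)*(Yv m 2)*(Yv m 4)*(Zv m 1)*(Zv m 3) + (-8)*(Yv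 m 0)*(Yv m 2)*(Yv m 3)*(Zv m 2)*(Zv m 3) + (-4)*(Yv m 0)*(Yv m 2)*(Yv m 3)*(Zv m 0)*(Zv m 5) + (-4)*(Yv m 0)*(Yv m 2)^2*(Zv m 3)^2 + (-2)*(Yv m 0)*(Yv m 2)^2*(Zv m 1)*(Zv m 5) + (-8)*(Yv m 0)*(Yv m 1)*(Yv m 5)*(Zv m 0)*(Zv m 4) + (-8)*(Yv m 0)*(Yv m 1)*(Yv m 4)*(Zv m 1)*(Zv m 4) + (-4)*(Yv m 0)*(Yv m 1)*(Yv m 4)*(Zv m 0)*(Zv m 5) + (-8)*(Yv m 0)*(Yv m 1)*(Yv m 3)*(Zv m 2)*(Zv m 4) + (-4)*(Yv m 0)*(Yv m 1)*(Yv m 3)*(Zv m 1)*(Zv m 5) + (-8)*(Yv m 0)*(Yv m 1)*(Yv m 2)*(Zv m 3)*(Zv m 4) + (-4)*(Yv m 0)*(Yv m 1)^2*(Zv m 4)^2 + (-2)*(Yv m 0)*(Yv m 1)^2*(Zv m 3)*(Zv m 5) + (-4)*(Yv m 0)^2*(Yv m 5)*(Zv m 0)*(Zv m 5) + (-4)*(Yv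 m 0)^2*(Yv m 4)*(Zv m 1)*(Zv m 5) + (-4)*(Yv m 0)^2*(Yv m 3)*(Zv m 2)*(Zv m 5) + (-4)*(Yv m 0)^2*(Yv m 2)*(Zv m 3)*(Zv m 5) + (-4)*(Yv m 0)^2*(Yv m 1)*(Zv m 4)*(Zv m 5) + (-1)*(Yv m 0)^3*(Zv m 5)^2 + (-8)*(Xv m 3)^2*(Yv m 4)*(Zv m 0) + (-8)*(Xv m 3)^2*(Yv m 3)*(Zv m 1) + (-8)*(Xv m 3)^2*(Yv m 2)*(Zv m 2) + (-8)*(Xv m 3)^2*(Yv m 1)*(Zv m 3) + (-4)*(Xv m 3)^2*(Yv m 0)*(Zv m 4) + (8)*(Xv m 2)*(Xv m 3)*(Yv m 5)*(Zv m 0) + (8)*(Xv m 2)*(Xv m 3)*(Yv m 4)*(Zv m 1) + (8)*(Xv m 2)*(Xv m 3)*(Yv m 3)*(Zv m 2) + (8)*(Xv m 2)*(Xv m 3)*(Yv m 2)*(Zv m 3) + (8)*(Xv m 2)*(Xv m 3)*(Yv m 1)*(Zv m 4) + (4)*(Xv m 2)*(Xv m 3)*(Yv m 0)*(Zv m 5))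 * Yv m 0
    + ((-36)*(Zv m 1)*(Zv m 2)^3*(Zv m 3) + (-36)*(Zv m 1)^2*(Zv m 2)*(Zv m 3)^2 + (-36)*(Zv m 1)^2*(Zv m 2)^2*(Zv m 4) + (-36)*(Zv m 1)^3*(Zv m 3)*(Zv m 4) + (-36)*(Zv m 0)*(Zv m 2)^2*(Zv m 3)^2 + (-72)*(Zv m 0)*(Zv m 1)*(Zv m 2)*(Zv m 3)*(Zv m 4) + (-18)*(Zv m 0)*(Zv m 1)*(Zv m 2)^2*(Zv m 5) + (-36)*(Zv m 0)*(Zv m 1)^2*(Zv m 4)^2 + (-18)*(Zv m 0)*(Zv m 1)^2*(Zv m 3)*(Zv m 5) + (-36)*(Zv m 0)^2*(Zv m 2)*(Zv m 3)*(Zv m 5) + (-36)*(Zv m 0)^2*(Zv m 1)*(Zv m 4)*(Zv m 5) + (-9)*(Zv m 0)^3*(Zv m 5)^2 + (12)*(Yv m 2)*(Yv m 3)*(Zv m 1)*(Zv m 2)^2 + (12)*(Yv m 2)*(Yv m 3)*(Zv m 1)^2*(Zv m 3) + (24)*(Yv m 2)*(Yv m 3)*(Zv m 0)*(Zv m 2)*(Zv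 m 3) + (24)*(Yv m 2)*(Yv m 3)*(Zv m 0)*(Zv m 1)*(Zv m 4) + (12)*(Yv m 2)*(Yv m 3)*(Zv m 0)^2*(Zv m 5) + (12)*(Yv m 2)^2*(Zv m 1)*(Zv m 2)*(Zv m 3) + (12)*(Yv m 2)^2*(Zv m 1)^2*(Zv m 4) + (6)*(Yv m 2)^2*(Zv m 0)*(Zv m 1)*(Zv m 5) + (-4)*(Yv m 2)^2*(Yv m 3)^2*(Zv m 0) + (-4)*(Yv m 2)^3*(Yv m 3)*(Zv m 1) + (12)*(Yv m 1)*(Yv m 4)*(Zv m 1)*(Zv m 2)^2 + (12)*(Yv m 1)*(Yv m 4)*(Zv m 1)^2*(Zv m 3) + (24)*(Yv m 1)*(Yv m 4)*(Zv m 0)*(Zv m 2)*(Zv m 3) + (24)*(Yv m 1)*(Yv m 4)*(Zv m 0)*(Zv m 1)*(Zv m 4) + (12)*(Yv m 1)*(Yv m 4)*(Zv m 0)^2*(Zv m 5) + (24)*(Yv m 1)*(Yv m 3)*(Zv m 1)*(Zv m 2)*(Zv m 3) + (24)*(Yv m 1)*(Yv m 3)*(Zv m 1)^2*(Zv m 4)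 + (12)*(Yv m 1)*(Yv m 3)*(Zv m 0)*(Zv m 1)*(Zv m 5) + (-8)*(Yv m 1)*(Yv m 2)*(Yv m 3)*(Yv m 4)*(Zv m 0) + (-8)*(Yv m 1)*(Yv m 2)*(Yv m 3)^2*(Zv m 1) + (-4)*(Yv m 1)*(Yv m 2)^2*(Yv m 4)*(Zv m 1) + (12)*(Yv m 1)^2*(Zv m 2)*(Zv m 3)^2 + (12)*(Yv m 1)^2*(Zv m 1)*(Zv m 3)*(Zv m 4) + (6)*(Yv m 1)^2*(Zv m 0)*(Zv m 3)*(Zv m 5) + (-4)*(Yv m 1)^2*(Yv m 4)^2*(Zv m 0) + (-8)*(Yv m 1)^2*(Yv m 3)*(Yv m 4)*(Zv m 1) + (-4)*(Yv m 1)^2*(Yv m 2)*(Yv m 3)*(Zv m 3) + (-4)*(Yv m 1)^3*(Yv m 4)*(Zv m 3) + (12)*(Xv m 3)^2*(Zv m 2)^2 + (24)*(Xv m 3)^2*(Zv m 1)*(Zv m 3) + (12)*(Xv m 3)^2*(Zv m 0)*(Zv m 4) + (-4)*(Xv m 3)^2*(Yv m 2)^2 + (-8)*(Xv m 3)^2*(Yv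 m 1)*(Yv m 3) + (-24)*(Xv m 2)*(Xv m 3)*(Zv m 2)*(Zv m 3) + (-24)*(Xv m 2)*(Xv m 3)*(Zv m 1)*(Zv m 4) + (-12)*(Xv m 2)*(Xv m 3)*(Zv m 0)*(Zv m 5) + (8)*(Xv m 2)*(Xv m 3)*(Yv m 2)*(Yv m 3) + (8)*(Xv m 2)*(Xv m 3)*(Yv m 1)*(Yv m 4)) * Zv m 0
    + ((-9)*(Zv m 1)*(Zv m 2)^4 + (-18)*(Zv m 1)^2*(Zv m 2)^2*(Zv m 3) + (-9)*(Zv m 1)^3*(Zv m 3)^2 + (6)*(Yv m 2)^2*(Zv m 1)*(Zv m 2)^2 + (6)*(Yv m 2)^2*(Zv m 1)^2*(Zv m 3) + (-1)*(Yv m 2)^4*(Zv m 1) + (12)*(Yv m 1)*(Yv m 3)*(Zv m 1)*(Zv m 2)^2 + (12)*(Yv m 1)*(Yv m 3)*(Zv m 1)^2*(Zv m 3) + (-4)*(Yv m 1)*(Yv m 2)^2*(Yv m 3)*(Zv m 1) + (6)*(Yv m 1)^2*(Zv m 2)^2*(Zv m 3) + (6)*(Yv m 1)^2*(Zv m 1)*(Zv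 m 3)^2 + (-4)*(Yv m 1)^2*(Yv m 3)^2*(Zv m 1) + (-2)*(Yv m 1)^2*(Yv m 2)^2*(Zv m 3) + (-4)*(Yv m 1)^3*(Yv m 3)*(Zv m 3) + (12)*(Xv m 3)^2*(Zv m 1)*(Zv m 2) + (-8)*(Xv m 3)^2*(Yv m 1)*(Yv m 2) + (-12)*(Xv m 2)*(Xv m 3)*(Zv m 2)^2 + (-12)*(Xv m 2)*(Xv m 3)*(Zv m 1)*(Zv m 3) + (4)*(Xv m 2)*(Xv m 3)*(Yv m 2)^2 + (8)*(Xv m 2)*(Xv m 3)*(Yv m 1)*(Yv m 3)) * Zv m 1 := by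
  rw [fD4_eq, fD5_eq]
  ring

set_option maxHeartbeats 4000000 in
lemma key2 (m : ℕ) :
    Yv m 1 ^ 2 * (-Yv m 2 ^ 4 - 4 * Yv m 2 ^ 3 * Zv m 2 + 2 * Yv m 2 ^ 2 * Zv m 2 ^ 2
      + 12 * Yv m 2 * Zv m 2 ^ 3 - 9 * Zv m 2 ^ 4 + 4 * Yv m 3 ^ 2 * Zv m 1 ^ 2
      - 8 * Yv m 3 * Zv m 1 ^ 2 * Zv m 3 + 4 * Zv m 1 ^ 2 * Zv m 3 ^ 2
      + 8 * Xv m 3 ^ 2 * Yv m 2 - 8 * Xv m 3 ^ 2 * Zv m 2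
      - 8 * Xv m 2 * Xv m 3 * Yv m 3 + 8 * Xv m 2 * Xv m 3 * Zv m 3)
    = (-(4*(Xv m 3)^2)) * fD m 4
    + (fD m 5 + 2*(Zv m 1)*((Yv m 2)^2 + 2*(Yv m 2)*(Zv m 2) - 3*(Zv m 2)^2)) * fD m 5
    + ((-9)*(Zv m 1)*(Zv m 2)^4 + (9)*(Zv m 1)^3*(Zv m 3)^2 + (12)*(Zv m 0)*(Zv m 1)*(Zv m 2)*(Zv m 3)^2 + (12)*(Zv m 0)*(Zv m 1)^2*(Zv m 3)*(Zv m 4) + (6)*(Zv m 0)^2*(Zv m 1)*(Zv m 3)*(Zv m 5) + (8)*(Yv m 4)*(Zv m 0)*(Zv m 1)^2*(Zv m 3) + (24)*(Yv m 4)*(Zv m 0)^2*(Zv m 2)*(Zv m 3) + (24)*(Yv m 4)*(Zv m 0)^2*(Zv m 1)*(Zv m 4) + (12)*(Yv m 4)*(Zv m 0)^3*(Zv m 5) + (-4)*(Yv m 4)^2*(Zv m 0)^2*(Zv m 1) + (24)*(Yv m 3)*(Zv m 0)*(Zv m 1)*(Zv m 2)*(Zv m 3) + (24)*(Yv m 3)*(Zv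 m 0)*(Zv m 1)^2*(Zv m 4) + (12)*(Yv m 3)*(Zv m 0)^2*(Zv m 1)*(Zv m 5) + (-8)*(Yv m 3)*(Yv m 4)*(Zv m 0)*(Zv m 1)^2 + (12)*(Yv m 2)*(Zv m 1)*(Zv m 2)^3 + (12)*(Yv m 2)*(Zv m 1)^2*(Zv m 2)*(Zv m 3) + (24)*(Yv m 2)*(Zv m 0)*(Zv m 2)^2*(Zv m 3) + (24)*(Yv m 2)*(Zv m 0)*(Zv m 1)*(Zv m 2)*(Zv m 4) + (12)*(Yv m 2)*(Zv m 0)^2*(Zv m 2)*(Zv m 5) + (-4)*(Yv m 2)*(Yv m 3)*(Zv m 0)*(Zv m 1)*(Zv m 3) + (-8)*(Yv m 2)*(Yv m 3)*(Yv m 4)*(Zv m 0)^2 + (-8)*(Yv m 2)*(Yv m 3)^2*(Zv m 0)*(Zv m 1) + (6)*(Yv m 2)^2*(Zv m 1)*(Zv m 2)^2 + (-8)*(Yv m 2)^2*(Yv m 3)*(Zv m 0)*(Zv m 2) + (-4)*(Yv m 2)^3*(Zv m 1)*(Zv m 2) + (-1)*(Yv m 2)^4*(Zv m 1) + (-9)*(Yv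 m 1)*(Zv m 2)^4 + (9)*(Yv m 1)*(Zv m 1)^2*(Zv m 3)^2 + (12)*(Yv m 1)*(Zv m 0)*(Zv m 2)*(Zv m 3)^2 + (12)*(Yv m 1)*(Zv m 0)*(Zv m 1)*(Zv m 3)*(Zv m 4) + (6)*(Yv m 1)*(Zv m 0)^2*(Zv m 3)*(Zv m 5) + (-4)*(Yv m 1)*(Yv m 4)*(Zv m 0)*(Zv m 1)*(Zv m 3) + (-4)*(Yv m 1)*(Yv m 4)^2*(Zv m 0)^2 + (-12)*(Yv m 1)*(Yv m 3)*(Zv m 1)^2*(Zv m 3) + (-8)*(Yv m 1)*(Yv m 3)*(Yv m 4)*(Zv m 0)*(Zv m 1) + (12)*(Yv m 1)*(Yv m 2)*(Zv m 2)^3 + (-8)*(Yv m 1)*(Yv m 2)*(Yv m 4)*(Zv m 0)*(Zv m 2) + (-8)*(Yv m 1)*(Yv m 2)*(Yv m 3)*(Zv m 1)*(Zv m 2) + (-4)*(Yv m 1)*(Yv m 2)*(Yv m 3)*(Zv m 0)*(Zv m 3) + (-2)*(Yv m 1)*(Yv m 2)^2*(Zv m 2)^2 + (-4)*(Yv m 1)*(Yv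 m 2)^3*(Zv m 2) + (-1)*(Yv m 1)*(Yv m 2)^4 + (-1)*(Yv m 1)^2*(Zv m 1)*(Zv m 3)^2 + (-4)*(Yv m 1)^2*(Yv m 4)*(Zv m 0)*(Zv m 3) + (-4)*(Yv m 1)^2*(Yv m 3)*(Zv m 1)*(Zv m 3) + (-4)*(Yv m 1)^2*(Yv m 2)*(Zv m 2)*(Zv m 3) + (-1)*(Yv m 1)^3*(Zv m 3)^2 + (8)*(Yv m 0)*(Zv m 1)^2*(Zv m 3)*(Zv m 4) + (24)*(Yv m 0)*(Zv m 0)*(Zv m 2)*(Zv m 3)*(Zv m 4) + (24)*(Yv m 0)*(Zv m 0)*(Zv m 1)*(Zv m 4)^2 + (12)*(Yv m 0)*(Zv m 0)^2*(Zv m 4)*(Zv m 5) + (-4)*(Yv m 0)*(Yv m 5)*(Zv m 0)*(Zv m 1)*(Zv m 3) + (-4)*(Yv m 0)*(Yv m 4)*(Zv m 1)^2*(Zv m 3) + (-8)*(Yv m 0)*(Yv m 4)*(Zv m 0)*(Zv m 1)*(Zv m 4) + (-8)*(Yv m 0)*(Yv m 4)*(Yv m 5)*(Zv m 0)^2 +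 (-8)*(Yv m 0)*(Yv m 4)^2*(Zv m 0)*(Zv m 1) + (-4)*(Yv m 0)*(Yv m 3)*(Zv m 1)*(Zv m 2)*(Zv m 3) + (-8)*(Yv m 0)*(Yv m 3)*(Zv m 1)^2*(Zv m 4) + (-8)*(Yv m 0)*(Yv m 3)*(Yv m 5)*(Zv m 0)*(Zv m 1) + (-8)*(Yv m 0)*(Yv m 3)*(Yv m 4)*(Zv m 1)^2 + (-8)*(Yv m 0)*(Yv m 3)*(Yv m 4)*(Zv m 0)*(Zv m 2) + (-8)*(Yv m 0)*(Yv m 3)^2*(Zv m 1)*(Zv m 2) + (-4)*(Yv m 0)*(Yv m 2)*(Zv m 1)*(Zv m 3)^2 + (-8)*(Yv m 0)*(Yv m 2)*(Yv m 5)*(Zv m 0)*(Zv m 2) + (-8)*(Yv m 0)*(Yv m 2)*(Yv m 4)*(Zv m 1)*(Zv m 2) + (-8)*(Yv m 0)*(Yv m 2)*(Yv m 4)*(Zv m 0)*(Zv m 3) + (-8)*(Yv m 0)*(Yv m 2)*(Yv m 3)*(Zv m 2)^2 + (-8)*(Yv m 0)*(Yv m 2)*(Yv m 3)*(Zv m 1)*(Zv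 m 3) + (-8)*(Yv m 0)*(Yv m 2)*(Yv m 3)*(Zv m 0)*(Zv m 4) + (-8)*(Yv m 0)*(Yv m 2)^2*(Zv m 2)*(Zv m 3) + (-4)*(Yv m 0)*(Yv m 1)*(Zv m 1)*(Zv m 3)*(Zv m 4) + (-4)*(Yv m 0)*(Yv m 1)*(Yv m 5)*(Zv m 0)*(Zv m 3) + (-4)*(Yv m 0)*(Yv m 1)*(Yv m 4)*(Zv m 1)*(Zv m 3) + (-8)*(Yv m 0)*(Yv m 1)*(Yv m 4)*(Zv m 0)*(Zv m 4) + (-4)*(Yv m 0)*(Yv m 1)*(Yv m 3)*(Zv m 2)*(Zv m 3) + (-8)*(Yv m 0)*(Yv m 1)*(Yv m 3)*(Zv m 1)*(Zv m 4) + (-4)*(Yv m 0)*(Yv m 1)*(Yv m 2)*(Zv m 3)^2 + (-8)*(Yv m 0)*(Yv m 1)*(Yv m 2)*(Zv m 2)*(Zv m 4) + (-4)*(Yv m 0)*(Yv m 1)^2*(Zv m 3)*(Zv m 4) + (-4)*(Yv m 0)^2*(Zv m 1)*(Zv m 4)^2 + (-2)*(Yv m 0)^2*(Zv m 1)*(Zv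 m 3)*(Zv m 5) + (-8)*(Yv m 0)^2*(Yv m 5)*(Zv m 0)*(Zv m 4) + (-8)*(Yv m 0)^2*(Yv m 4)*(Zv m 1)*(Zv m 4) + (-4)*(Yv m 0)^2*(Yv m 4)*(Zv m 0)*(Zv m 5) + (-8)*(Yv m 0)^2*(Yv m 3)*(Zv m 2)*(Zv m 4) + (-4)*(Yv m 0)^2*(Yv m 3)*(Zv m 1)*(Zv m 5) + (-8)*(Yv m 0)^2*(Yv m 2)*(Zv m 3)*(Zv m 4) + (-4)*(Yv m 0)^2*(Yv m 2)*(Zv m 2)*(Zv m 5) + (-4)*(Yv m 0)^2*(Yv m 1)*(Zv m 4)^2 + (-2)*(Yv m 0)^2*(Yv m 1)*(Zv m 3)*(Zv m 5) + (-4)*(Yv m 0)^3*(Zv m 4)*(Zv m 5) + (-12)*(Xv m 3)^2*(Zv m 1)*(Zv m 2) + (-8)*(Xv m 3)^2*(Yv m 3)*(Zv m 0) + (-12)*(Xv m 3)^2*(Yv m 1)*(Zv m 2) + (8)*(Xv m 3)^2*(Yv m 1)*(Yv m 2) + (-8)*(Xv m 3)^2*(Yv m 0)*(Zv m 3) + (12)*(Xv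 m 2)*(Xv m 3)*(Zv m 1)*(Zv m 3) + (8)*(Xv m 2)*(Xv m 3)*(Yv m 4)*(Zv m 0) + (8)*(Xv m 2)*(Xv m 3)*(Yv m 2)*(Zv m 2) + (12)*(Xv m 2)*(Xv m 3)*(Yv m 1)*(Zv m 3) + (-8)*(Xv m 2)*(Xv m 3)*(Yv m 1)*(Yv m 3) + (8)*(Xv m 2)*(Xv m 3)*(Yv m 0)*(Zv m 4) + (4)*(Xv m 1)*(Xv m 4)*(Zv m 1)*(Zv m 3) + (8)*(Xv m 1)*(Xv m 4)*(Yv m 4)*(Zv m 0) + (8)*(Xv m 1)*(Xv m 4)*(Yv m 3)*(Zv m 1) + (8)*(Xv m 1)*(Xv m 4)*(Yv m 2)*(Zv m 2) + (4)*(Xv m 1)*(Xv m 4)*(Yv m 1)*(Zv m 3) + (8)*(Xv m 1)*(Xv m 4)*(Yv m 0)*(Zv m 4) + (4)*(Xv m 0)*(Xv m 5)*(Zv m 1)*(Zv m 3) + (8)*(Xv m 0)*(Xv m 5)*(Yv m 4)*(Zv m 0) + (8)*(Xv m 0)*(Xv m 5)*(Yv m 3)*(Zv m 1) + (8)*(Xv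 m 0)*(Xv m 5)*(Yv m 2)*(Zv m 2) + (4)*(Xv m 0)*(Xv m 5)*(Yv m 1)*(Zv m 3) + (8)*(Xv m 0)*(Xv m 5)*(Yv m 0)*(Zv m 4)) * (Yv m 1 - Zv m 1)
    + ((-8)*(Xv m 5)*(Zv m 1)^2*(Zv m 3) + (-24)*(Xv m 5)*(Zv m 0)*(Zv m 2)*(Zv m 3) + (-24)*(Xv m 5)*(Zv m 0)*(Zv m 1)*(Zv m 4) + (-12)*(Xv m 5)*(Zv m 0)^2*(Zv m 5) + (8)*(Xv m 5)*(Yv m 4)*(Zv m 0)*(Zv m 1) + (8)*(Xv m 5)*(Yv m 3)*(Zv m 1)^2 + (8)*(Xv m 5)*(Yv m 2)*(Yv m 3)*(Zv m 0) + (8)*(Xv m 5)*(Yv m 0)*(Zv m 1)*(Zv m 4) + (8)*(Xv m 5)*(Yv m 0)*(Yv m 5)*(Zv m 0) + (8)*(Xv m 5)*(Yv m 0)*(Yv m 4)*(Zv m 1) + (8)*(Xv m 5)*(Yv m 0)*(Yv m 3)*(Zv m 2) + (8)*(Xv m 5)*(Yv m 0)*(Yv m 2)*(Zv m 3) + (4)*(Xv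 m 5)*(Yv m 0)^2*(Zv m 5) + (8)*(Xv m 3)^2*(Xv m 4) + (-8)*(Xv m 2)*(Xv m 3)*(Xv m 5) + (-8)*(Xv m 1)*(Xv m 4)*(Xv m 5) + (-4)*(Xv m 0)*(Xv m 5)^2) * Xv m 0
    + ((-8)*(Xv m 4)*(Zv m 1)^2*(Zv m 3) + (-24)*(Xv m 4)*(Zv m 0)*(Zv m 2)*(Zv m 3) + (-24)*(Xv m 4)*(Zv m 0)*(Zv m 1)*(Zv m 4) + (-12)*(Xv m 4)*(Zv m 0)^2*(Zv m 5) + (8)*(Xv m 4)*(Yv m 4)*(Zv m 0)*(Zv m 1) + (8)*(Xv m 4)*(Yv m 3)*(Zv m 1)^2 + (8)*(Xv m 4)*(Yv m 2)*(Yv m 3)*(Zv m 0) + (8)*(Xv m 4)*(Yv m 0)*(Zv m 1)*(Zv m 4) + (8)*(Xv m 4)*(Yv m 0)*(Yv m 5)*(Zv m 0) + (8)*(Xv m 4)*(Yv m 0)*(Yv m 4)*(Zv m 1) + (8)*(Xv m 4)*(Yv m 0)*(Yv m 3)*(Zv m 2) + (8)*(Xv m 4)*(Yv m 0)*(Yv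 m 2)*(Zv m 3) + (4)*(Xv m 4)*(Yv m 0)^2*(Zv m 5) + (8)*(Xv m 3)^3 + (-8)*(Xv m 2)*(Xv m 3)*(Xv m 4) + (-4)*(Xv m 1)*(Xv m 4)^2) * Xv m 1
    + ((8)*(Zv m 1)^3*(Zv m 3)*(Zv m 4) + (24)*(Zv m 0)*(Zv m 1)*(Zv m 2)*(Zv m 3)*(Zv m 4) + (24)*(Zv m 0)*(Zv m 1)^2*(Zv m 4)^2 + (12)*(Zv m 0)^2*(Zv m 1)*(Zv m 4)*(Zv m 5) + (8)*(Yv m 5)*(Zv m 0)*(Zv m 1)^2*(Zv m 3) + (24)*(Yv m 5)*(Zv m 0)^2*(Zv m 2)*(Zv m 3) + (24)*(Yv m 5)*(Zv m 0)^2*(Zv m 1)*(Zv m 4) + (12)*(Yv m 5)*(Zv m 0)^3*(Zv m 5) + (8)*(Yv m 4)*(Zv m 1)^3*(Zv m 3) + (24)*(Yv m 4)*(Zv m 0)*(Zv m 1)*(Zv m 2)*(Zv m 3) + (16)*(Yv m 4)*(Zv m 0)*(Zv m 1)^2*(Zv m 4) + (12)*(Yv m 4)*(Zv m 0)^2*(Zv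 m 1)*(Zv m 5) + (-8)*(Yv m 4)*(Yv m 5)*(Zv m 0)^2*(Zv m 1) + (-8)*(Yv m 4)^2*(Zv m 0)*(Zv m 1)^2 + (8)*(Yv m 3)*(Zv m 1)^2*(Zv m 2)*(Zv m 3) + (-8)*(Yv m 3)*(Zv m 1)^3*(Zv m 4) + (24)*(Yv m 3)*(Zv m 0)*(Zv m 2)^2*(Zv m 3) + (24)*(Yv m 3)*(Zv m 0)*(Zv m 1)*(Zv m 2)*(Zv m 4) + (12)*(Yv m 3)*(Zv m 0)^2*(Zv m 2)*(Zv m 5) + (-8)*(Yv m 3)*(Yv m 5)*(Zv m 0)*(Zv m 1)^2 + (-8)*(Yv m 3)*(Yv m 4)*(Zv m 1)^3 + (-8)*(Yv m 3)*(Yv m 4)*(Zv m 0)*(Zv m 1)*(Zv m 2) + (-8)*(Yv m 3)^2*(Zv m 1)^2*(Zv m 2) + (8)*(Yv m 2)*(Zv m 1)^2*(Zv m 3)^2 + (24)*(Yv m 2)*(Zv m 0)*(Zv m 2)*(Zv m 3)^2 + (24)*(Yv m 2)*(Zv m 0)*(Zv m 1)*(Zv m 3)*(Zv m 4) + (12)*(Yv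 m 2)*(Zv m 0)^2*(Zv m 3)*(Zv m 5) + (-8)*(Yv m 2)*(Yv m 4)*(Zv m 0)*(Zv m 1)*(Zv m 3) + (-8)*(Yv m 2)*(Yv m 3)*(Zv m 1)^2*(Zv m 3) + (-8)*(Yv m 2)*(Yv m 3)*(Zv m 0)*(Zv m 1)*(Zv m 4) + (-8)*(Yv m 2)*(Yv m 3)*(Yv m 5)*(Zv m 0)^2 + (-8)*(Yv m 2)*(Yv m 3)*(Yv m 4)*(Zv m 0)*(Zv m 1) + (-8)*(Yv m 2)*(Yv m 3)^2*(Zv m 0)*(Zv m 2) + (-8)*(Yv m 2)^2*(Yv m 3)*(Zv m 0)*(Zv m 3) + (-4)*(Yv m 0)*(Zv m 1)^2*(Zv m 4)^2 + (4)*(Yv m 0)*(Zv m 1)^2*(Zv m 3)*(Zv m 5) + (12)*(Yv m 0)*(Zv m 0)*(Zv m 2)*(Zv m 3)*(Zv m 5) + (12)*(Yv m 0)*(Zv m 0)*(Zv m 1)*(Zv m 4)*(Zv m 5) + (6)*(Yv m 0)*(Zv m 0)^2*(Zv m 5)^2 + (-8)*(Yv m 0)*(Yv m 5)*(Zv m 0)*(Zv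 m 1)*(Zv m 4) + (-4)*(Yv m 0)*(Yv m 5)^2*(Zv m 0)^2 + (-8)*(Yv m 0)*(Yv m 4)*(Zv m 1)^2*(Zv m 4) + (-4)*(Yv m 0)*(Yv m 4)*(Zv m 0)*(Zv m 1)*(Zv m 5) + (-8)*(Yv m 0)*(Yv m 4)*(Yv m 5)*(Zv m 0)*(Zv m 1) + (-4)*(Yv m 0)*(Yv m 4)^2*(Zv m 1)^2 + (-8)*(Yv m 0)*(Yv m 3)*(Zv m 1)*(Zv m 2)*(Zv m 4) + (-4)*(Yv m 0)*(Yv m 3)*(Zv m 1)^2*(Zv m 5) + (-8)*(Yv m 0)*(Yv m 3)*(Yv m 5)*(Zv m 0)*(Zv m 2) + (-8)*(Yv m 0)*(Yv m 3)*(Yv m 4)*(Zv m 1)*(Zv m 2) + (-4)*(Yv m 0)*(Yv m 3)^2*(Zv m 2)^2 + (-8)*(Yv m 0)*(Yv m 2)*(Zv m 1)*(Zv m 3)*(Zv m 4) + (-8)*(Yv m 0)*(Yv m 2)*(Yv m 5)*(Zv m 0)*(Zv m 3) + (-8)*(Yv m 0)*(Yv m 2)*(Yv m 4)*(Zv m 1)*(Zv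 m 3) + (-8)*(Yv m 0)*(Yv m 2)*(Yv m 3)*(Zv m 2)*(Zv m 3) + (-4)*(Yv m 0)*(Yv m 2)*(Yv m 3)*(Zv m 0)*(Zv m 5) + (-4)*(Yv m 0)*(Yv m 2)^2*(Zv m 3)^2 + (-4)*(Yv m 0)^2*(Zv m 1)*(Zv m 4)*(Zv m 5) + (-4)*(Yv m 0)^2*(Yv m 5)*(Zv m 0)*(Zv m 5) + (-4)*(Yv m 0)^2*(Yv m 4)*(Zv m 1)*(Zv m 5) + (-4)*(Yv m 0)^2*(Yv m 3)*(Zv m 2)*(Zv m 5) + (-4)*(Yv m 0)^2*(Yv m 2)*(Zv m 3)*(Zv m 5) + (-1)*(Yv m 0)^3*(Zv m 5)^2 + (-8)*(Xv m 3)^2*(Zv m 1)*(Zv m 3) + (-8)*(Xv m 3)^2*(Yv m 4)*(Zv m 0) + (-8)*(Xv m 3)^2*(Yv m 3)*(Zv m 1) + (-8)*(Xv m 3)^2*(Yv m 2)*(Zv m 2) + (-4)*(Xv m 3)^2*(Yv m 0)*(Zv m 4) + (8)*(Xv m 2)*(Xv m 3)*(Zv m 1)*(Zv m 4) + (8)*(Xv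 m 2)*(Xv m 3)*(Yv m 5)*(Zv m 0) + (8)*(Xv m 2)*(Xv m 3)*(Yv m 4)*(Zv m 1) + (8)*(Xv m 2)*(Xv m 3)*(Yv m 3)*(Zv m 2) + (8)*(Xv m 2)*(Xv m 3)*(Yv m 2)*(Zv m 3) + (4)*(Xv m 2)*(Xv m 3)*(Yv m 0)*(Zv m 5)) * Yv m 0
    + ((-24)*(Zv m 1)^2*(Zv m 2)*(Zv m 3)^2 + (-24)*(Zv m 1)^3*(Zv m 3)*(Zv m 4) + (-36)*(Zv m 0)*(Zv m 2)^2*(Zv m 3)^2 + (-72)*(Zv m 0)*(Zv m 1)*(Zv m 2)*(Zv m 3)*(Zv m 4) + (-36)*(Zv m 0)*(Zv m 1)^2*(Zv m 4)^2 + (-12)*(Zv m 0)*(Zv m 1)^2*(Zv m 3)*(Zv m 5) + (-36)*(Zv m 0)^2*(Zv m 2)*(Zv m 3)*(Zv m 5) + (-36)*(Zv m 0)^2*(Zv m 1)*(Zv m 4)*(Zv m 5) + (-9)*(Zv m 0)^3*(Zv m 5)^2 + (8)*(Yv m 4)*(Zv m 1)^3*(Zv m 3) + (24)*(Yv m 4)*(Zv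 m 0)*(Zv m 1)*(Zv m 2)*(Zv m 3) + (24)*(Yv m 4)*(Zv m 0)*(Zv m 1)^2*(Zv m 4) + (12)*(Yv m 4)*(Zv m 0)^2*(Zv m 1)*(Zv m 5) + (-4)*(Yv m 4)^2*(Zv m 0)*(Zv m 1)^2 + (24)*(Yv m 3)*(Zv m 1)^2*(Zv m 2)*(Zv m 3) + (24)*(Yv m 3)*(Zv m 1)^3*(Zv m 4) + (12)*(Yv m 3)*(Zv m 0)*(Zv m 1)^2*(Zv m 5) + (-8)*(Yv m 3)*(Yv m 4)*(Zv m 1)^3 + (8)*(Yv m 2)*(Yv m 3)*(Zv m 1)^2*(Zv m 3) + (24)*(Yv m 2)*(Yv m 3)*(Zv m 0)*(Zv m 2)*(Zv m 3) + (24)*(Yv m 2)*(Yv m 3)*(Zv m 0)*(Zv m 1)*(Zv m 4) + (12)*(Yv m 2)*(Yv m 3)*(Zv m 0)^2*(Zv m 5) + (-8)*(Yv m 2)*(Yv m 3)*(Yv m 4)*(Zv m 0)*(Zv m 1) + (-8)*(Yv m 2)*(Yv m 3)^2*(Zv m 1)^2 + (-4)*(Yv m 2)^2*(Yv m 3)^2*(Zv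 m 0) + (12)*(Xv m 3)^2*(Zv m 2)^2 + (24)*(Xv m 3)^2*(Zv m 1)*(Zv m 3) + (12)*(Xv m 3)^2*(Zv m 0)*(Zv m 4) + (-8)*(Xv m 3)^2*(Yv m 3)*(Zv m 1) + (-4)*(Xv m 3)^2*(Yv m 2)^2 + (-24)*(Xv m 2)*(Xv m 3)*(Zv m 2)*(Zv m 3) + (-24)*(Xv m 2)*(Xv m 3)*(Zv m 1)*(Zv m 4) + (-12)*(Xv m 2)*(Xv m 3)*(Zv m 0)*(Zv m 5) + (8)*(Xv m 2)*(Xv m 3)*(Yv m 4)*(Zv m 1) + (8)*(Xv m 2)*(Xv m 3)*(Yv m 2)*(Yv m 3)) * Zv m 0 := by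
  rw [fD4_eq, fD5_eq]
  ring

theorem stmt15 (m : ℕ) (hm : 5 ≤ m) :
    (-4 * Yv m 2 ^ 2 * Zv m 2 ^ 2 + Yv m 1 ^ 2 * Zv m 3 ^ 2
      + 4 * Xv m 3 ^ 2 * Zv m 2 - 4 * Xv m 2 * Xv m 3 * Zv m 3) ∈ Idl m 1 ∧
    (-Yv m 2 ^ 4 - 4 * Yv m 2 ^ 3 * Zv m 2 + 2 * Yv m 2 ^ 2 * Zv m 2 ^ 2
      + 12 * Yv m 2 * Zv m 2 ^ 3 - 9 * Zv m 2 ^ 4 + 4 * Yv m 3 ^ 2 * Zv m 1 ^ 2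
      - 8 * Yv m 3 * Zv m 1 ^ 2 * Zv m 3 + 4 * Zv m 1 ^ 2 * Zv m 3 ^ 2
      + 8 * Xv m 3 ^ 2 * Yv m 2 - 8 * Xv m 3 ^ 2 * Zv m 2
      - 8 * Xv m 2 * Xv m 3 * Yv m 3 + 8 * Xv m 2 * Xv m 3 * Zv m 3) ∈ Idl m 2 := by
  have hF4_1 : fD m 4 ∈ Jd m 1 := Ideal.mem_sup_right (fD_mem_FId m 4 (by omega))
  have hF5_1 : fD m 5 ∈ Jd m 1 := Ideal.mem_sup_right (fD_mem_FId m 5 (by omega))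
  have hF4_2 : fD m 4 ∈ Jd m 2 := Ideal.mem_sup_right (fD_mem_FId m 4 (by omega))
  have hF5_2 : fD m 5 ∈ Jd m 2 := Ideal.mem_sup_right (fD_mem_FId m 5 (by omega))
  have hx0_1 : Xv m 0 ∈ Jd m 1 := Ideal.mem_sup_left (Ideal.subset_span (by simp))
  have hx1_1 : Xv m 1 ∈ Jd m 1 := Ideal.mem_sup_left (Ideal.subset_span (by simp))
  have hy0_1 : Yv m 0 ∈ Jd m 1 := Ideal.mem_sup_left (Ideal.subset_span (by simp))
  have hz0_1 : Zv m 0 ∈ Jd m 1 := Ideal.mem_sup_left (Ideal.subset_span (by simp))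
  have hz1_1 : Zv m 1 ∈ Jd m 1 := Ideal.mem_sup_left (Ideal.subset_span (by simp))
  have hx0_2 : Xv m 0 ∈ Jd m 2 := Ideal.mem_sup_left (Ideal.subset_span (by simp))
  have hx1_2 : Xv m 1 ∈ Jd m 2 := Ideal.mem_sup_left (Ideal.subset_span (by simp))
  have hy0_2 : Yv m 0 ∈ Jd m 2 := Ideal.mem_sup_left (Ideal.subset_span (by simp))
  have hz0_2 : Zv m 0 ∈ Jd m 2 := Ideal.mem_sup_left (Ideal.subset_span (by simp))
  have hs_2 : Yv m 1 - Zv m 1 ∈ Jd m 2 := Ideal.mem_sup_left (Ideal.subset_span (by simp))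
  constructor
  · have : Idl m 1 = contrAway m (Yv m 1) (Jd m 1) := by simp [Idl]
    rw [this]
    apply mem_contrAway_of_pow_mul_mem m (Yv m 1) _ (Jd m 1) 2
    rw [key1 m]
    exact add_mem (add_mem (add_mem (add_mem (add_mem (add_mem
      (Ideal.mul_mem_left _ _ hF4_1) (Ideal.mul_mem_left _ _ hF5_1))
      (Ideal.mul_mem_left _ _ hx0_1)) (Ideal.mul_mem_left _ _ hx1_1))
      (Ideal.mul_mem_left _ _ hy0_1)) (Ideal.mul_mem_left _ _ hz0_1))
      (Ideal.mul_mem_left _ _ hz1_1)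
  · have : Idl m 2 = contrAway m (Yv m 1) (Jd m 2) := by simp [Idl]
    rw [this]
    apply mem_contrAway_of_pow_mul_mem m (Yv m 1) _ (Jd m 2) 2
    rw [key2 m]
    exact add_mem (add_mem (add_mem (add_mem (add_mem (add_mem
      (Ideal.mul_mem_left _ _ hF4_2) (Ideal.mul_mem_left _ _ hF5_2))
      (Ideal.mul_mem_left _ _ hs_2)) (Ideal.mul_mem_left _ _ hx0_2))
      (Ideal.mul_mem_left _ _ hx1_2)) (Ideal.mul_mem_left _ _ hy0_2))
      (Ideal.mul_mem_left _ _ hz0_2)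


end
end
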